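/- arXiv:2106.07422 — 4 statements merged into one kernel-verified Lean document; each statement's English description precedes it below -/
import Mathlib

section
/- There exists a constant C > 0 with the following property: for all real numbers a₁ < b₁ and a₂ < b₂ with (b₁ − a₁)(b₂ − a₂) ≥ C, there exists α ∈ ℤ[√2] such that a₁ < α < b₁ and a₂ < σ(α) < b₂. (In other words, the Minkowski embedding 𝓛' of ℤ[√2] in ℝ² meets every axis-parallel open box of area at least C.) -/
open MeasureTheory Matrix Set Pointwise

noncomputable section

/-- The real embedding of `ℤ[√2]`, `a + b√2 ↦ a + b√2`. -/
def emb (α : Zsqrtd 2) : ℝ := (α.re : ℝ) + (α.im : ℝ) * Real.sqrt 2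

/-- The Galois-conjugate embedding `σ`, `a + b√2 ↦ a − b√2`. -/
def embc (α : Zsqrtd 2) : ℝ := (α.re : ℝ) - (α.im : ℝ) * Real.sqrt 2

/-- The fundamental unit `λ = 1 + √2`. -/
def lam : ℝ := 1 + Real.sqrt 2

/-- `𝓛'`: the Minkowski embedding of `ℤ[√2]` in `ℝ²`. -/
def Lp : Set (ℝ × ℝ) := {p | ∃ α : Zsqrtd 2, p = (emb α, embc α)}

/-- `v(β₁,β₂) = (β₁, β₂, σ(β₁), σ(β₂))`. -/
def latvec (β₁ β₂ : Zsqrtd 2) : Fin 4 → ℝ := ![emb β₁, emb β₂, embc β₁, embc β₂]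

/-- `𝓛`: the Minkowski embedding of `ℤ[√2]²` in `ℝ⁴`. -/
def Lquad : Set (Fin 4 → ℝ) := {v | ∃ β₁ β₂ : Zsqrtd 2, v = latvec β₁ β₂}

/-- `𝓛h`, for a 4×4 real matrix `h` (row vectors, right multiplication). -/
def latimage (h : Matrix (Fin 4) (Fin 4) ℝ) : Set (Fin 4 → ℝ) :=
  (fun v => Matrix.vecMul v h) '' Lquad

def nmat (x : ℝ) : Matrix (Fin 2) (Fin 2) ℝ := !![1, x; 0, 1]
def amat (y : ℝ) : Matrix (Fin 2) (Fin 2) ℝ := !![y, 0; 0, y⁻¹]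
def kmat (θ : ℝ) : Matrix (Fin 2) (Fin 2) ℝ :=
  !![Real.cos θ, -Real.sin θ; Real.sin θ, Real.cos θ]

/-- Block diagonal 4×4 matrix from two 2×2 blocks. -/
def bd (A B : Matrix (Fin 2) (Fin 2) ℝ) : Matrix (Fin 4) (Fin 4) ℝ :=
  !![A 0 0, A 0 1, 0, 0;
     A 1 0, A 1 1, 0, 0;
     0, 0, B 0 0, B 0 1;
     0, 0, B 1 0, B 1 1]

/-- `h(x₁,x₂,y₁,y₂,θ₁,θ₂) = diag(n(x₁)a(y₁)k(θ₁), n(x₂)a(y₂)k(θ₂))`. -/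
def hmat (x₁ x₂ y₁ y₂ θ₁ θ₂ : ℝ) : Matrix (Fin 4) (Fin 4) ℝ :=
  bd (nmat x₁ * amat y₁ * kmat θ₁) (nmat x₂ * amat y₂ * kmat θ₂)

/-- `H = SL₂(ℝ)² ⊂ SL₄(ℝ)` (block diagonal). -/
def Hset : Set (Matrix (Fin 4) (Fin 4) ℝ) :=
  {h | ∃ A B : Matrix (Fin 2) (Fin 2) ℝ, A.det = 1 ∧ B.det = 1 ∧ h = bd A B}

/-- `Γ_K = {diag(A, σ(A)) : A ∈ SL₂(ℤ[√2])}`. -/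
def GammaK : Set (Matrix (Fin 4) (Fin 4) ℝ) :=
  {g | ∃ A : Matrix (Fin 2) (Fin 2) (Zsqrtd 2), A.det = 1 ∧ g = bd (A.map emb) (A.map embc)}

/-- `𝒲`: the open regular octagon of side length √2. -/
def Woct : Set (ℝ × ℝ) :=
  {p | |p.1| < lam / Real.sqrt 2 ∧ |p.2| < lam / Real.sqrt 2 ∧ |p.1| + |p.2| < lam}

/-- `𝒲' = 𝒲 ∖ (√2−1)𝒲`. -/
def Wp : Set (ℝ × ℝ) := Woct \ ((Real.sqrt 2 - 1) • Woct)

/-- `θ̂ = 48√2/π⁴`, the density of visible points. -/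
def thetaHat : ℝ := 48 * Real.sqrt 2 / Real.pi ^ 4

/-- `T(s)`: open triangle with vertices `(0,0)`, `(s/θ̂)^{1/2}(1,±1)`. -/
def Tset (s : ℝ) : Set (ℝ × ℝ) :=
  {p | 0 < p.1 ∧ p.1 < Real.sqrt (s / thetaHat) ∧ |p.2| < p.1}

/-- `𝔉`: a fundamental domain of `𝓛'`. -/
def Fdom : Set (ℝ × ℝ) :=
  {p | ∃ r₁ ∈ Set.Ico (0:ℝ) 1, ∃ r₂ ∈ Set.Ico (0:ℝ) 1,
    p = (1 + r₁ + r₂ * Real.sqrt 2, 2 + r₁ - r₂ * Real.sqrt 2)}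

/-- The Siegel domain `𝔇_t`. -/
def Dset (t : ℝ) : Set (Matrix (Fin 4) (Fin 4) ℝ) :=
  {h | ∃ x₁ x₂ y₁ y₂ θ₁ θ₂ : ℝ, (x₁, x₂) ∈ Fdom ∧ 0 < y₁ ∧ 0 < y₂ ∧ t ≤ y₁ * y₂ ∧
    lam ^ (-2 : ℤ) ≤ y₁ / y₂ ∧ y₁ / y₂ ≤ lam ^ 2 ∧
    θ₁ ∈ Set.Ico 0 Real.pi ∧ θ₂ ∈ Set.Ico 0 Real.pi ∧ h = hmat x₁ x₂ y₁ y₂ θ₁ θ₂}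

/-- Row vector times 2×2 matrix, on `ℝ × ℝ`. -/
def mul2 (p : ℝ × ℝ) (M : Matrix (Fin 2) (Fin 2) ℝ) : ℝ × ℝ :=
  (p.1 * M 0 0 + p.2 * M 1 0, p.1 * M 0 1 + p.2 * M 1 1)

/-- `r(s)`: the unique integer with `λ^{2r} ≤ s^{1/4} < λ^{2(r+1)}`. -/
def rr (s : ℝ) : ℤ := ⌊Real.logb (lam ^ 2) (s ^ ((1:ℝ)/4))⌋

/-- `𝒯(s)` with explicit integer `r`: `λ^{−2r}T(s) × λ^{2r}𝒲`. -/
def calT (s : ℝ) (r : ℤ) : Set (Fin 4 → ℝ) :=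
  {v | (lam ^ (2*r) * v 0, lam ^ (2*r) * v 1) ∈ Tset s ∧
       (lam ^ (-(2*r)) * v 2, lam ^ (-(2*r)) * v 3) ∈ Woct}

/-- `𝒯(s) = λ^{−2r(s)}T(s) × λ^{2r(s)}𝒲`. -/
def calTs (s : ℝ) : Set (Fin 4 → ℝ) := calT s (rr s)

/-- Euclidean norm on `ℝ⁴`. -/
def enorm4 (v : Fin 4 → ℝ) : ℝ := Real.sqrt (∑ i, (v i) ^ 2)

/-- `𝓛h̃ = (ℤ(y₁,0,y₂,0) + ℤ√2(y₁,0,−y₂,0) + ℝ(0,1,0,0) + ℝ(0,0,0,1))·diag(k(θ₁),k(θ₂))`. -/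
def Ltilde (y₁ y₂ θ₁ θ₂ : ℝ) : Set (Fin 4 → ℝ) :=
  {v | ∃ (m n : ℤ) (c₁ c₂ : ℝ),
    v = Matrix.vecMul ![((m:ℝ) + (n:ℝ) * Real.sqrt 2) * y₁, c₁,
          ((m:ℝ) - (n:ℝ) * Real.sqrt 2) * y₂, c₂] (bd (kmat θ₁) (kmat θ₂))}

open Classical in
/-- Real-valued indicator of a proposition. -/
def ind (P : Prop) : ℝ := if P then 1 else 0

/-- `c_H = 3/π⁴`. -/
def cH : ℝ := 3 / Real.pi ^ 4

/-- `Y_t = {(y₁,y₂) : y₁,y₂ > 0, y₁y₂ ≥ t, y₁/y₂ ∈ (λ⁻²,λ²)}`. -/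
def Yt (t : ℝ) : Set (ℝ × ℝ) :=
  {y | 0 < y.1 ∧ 0 < y.2 ∧ t ≤ y.1 * y.2 ∧ lam ^ (-2:ℤ) < y.1 / y.2 ∧ y.1 / y.2 < lam ^ 2}

/-- The main term `G_M(s)` (depending on the Siegel-domain parameter `t`). -/
def GM (t s : ℝ) : ℝ :=
  cH * ∫ θ₂ in Set.Ico (0:ℝ) Real.pi, ∫ θ₁ in Set.Ico (0:ℝ) Real.pi, ∫ y in Yt t, ∫ x in Fdom,
    (y.1 ^ 3 * y.2 ^ 3)⁻¹ * ind (Ltilde y.1 y.2 θ₁ θ₂ ∩ calTs s = ∅)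

/-- The error term `G_E(s)`. -/
def GE (t s : ℝ) : ℝ :=
  cH * ∫ θ₂ in Set.Ico (0:ℝ) Real.pi, ∫ θ₁ in Set.Ico (0:ℝ) Real.pi, ∫ y in Yt t, ∫ x in Fdom,
    (y.1 ^ 3 * y.2 ^ 3)⁻¹ *
      ind (latimage (hmat x.1 x.2 y.1 y.2 θ₁ θ₂) ∩ calTs s = ∅ ∧
           (Ltilde y.1 y.2 θ₁ θ₂ ∩ calTs s).Nonempty)

/-- `J = [0,π/4] ∪ [3π/4,π)`. -/
def Jset : Set ℝ := Set.Icc 0 (Real.pi/4) ∪ Set.Ico (3*Real.pi/4) Real.pi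

/-- `Y = {(y₁,y₂) : y₁ > 0, 1 < y₂ < λ²}`. -/
def Yset : Set (ℝ × ℝ) := {y | 0 < y.1 ∧ 1 < y.2 ∧ y.2 < lam ^ 2}

/-- `T₁`: open triangle with vertices `(0,0)`, `(1,±1)`. -/
def T1 : Set (ℝ × ℝ) := {p | 0 < p.1 ∧ p.1 < 1 ∧ |p.2| < p.1}

/-- `ℓ₁(θ₁)`: first-coordinate projection of `θ̂^{−1/2}T₁k(−θ₁)`. -/
def ell1 (θ₁ : ℝ) : Set ℝ :=
  {x | ∃ p ∈ T1, x = (mul2 ((Real.sqrt thetaHat)⁻¹ • p) (kmat (-θ₁))).1}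

/-- `ℓ₂(θ₂)`: first-coordinate projection of `𝒲k(−θ₂)`. -/
def ell2 (θ₂ : ℝ) : Set ℝ := {x | ∃ p ∈ Woct, x = (mul2 p (kmat (-θ₂))).1}

/-- `C_𝒫 = 2304(2−√2)/π⁸`. -/
def CP : ℝ := 2304 * (2 - Real.sqrt 2) / Real.pi ^ 8

/-- `ζ_K(2) = π⁴/(48√2)`. -/
def zetaK2 : ℝ := Real.pi ^ 4 / (48 * Real.sqrt 2)

/-- `𝒯'(s) = T(s) × 𝒲`. -/
def Tprime (s : ℝ) : Set (Fin 4 → ℝ) :=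
  {v | (v 0, v 1) ∈ Tset s ∧ (v 2, v 3) ∈ Woct}

/-- `L₁(θ₁)` from Lemma 3.4: projection of `λ^{−2r}T(s)k(−θ₁)` onto the x-axis. -/
def L1set (s : ℝ) (r : ℤ) (θ₁ : ℝ) : Set ℝ :=
  {x | ∃ p ∈ Tset s, x = (mul2 ((lam ^ (-(2*r)) : ℝ) • p) (kmat (-θ₁))).1}

/-- `L₂(θ₂)`: projection of `λ^{2r}𝒲k(−θ₂)` onto the x-axis. -/
def L2set (r : ℤ) (θ₂ : ℝ) : Set ℝ :=
  {x | ∃ p ∈ Woct, x = (mul2 ((lam ^ (2*r) : ℝ) • p) (kmat (-θ₂))).1}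

/-- `n(x)a(y)k(θ)` where `y,θ` are determined by `y⁻¹(sin θ, cos θ) = z`. -/
def hz (z : ℝ × ℝ) (x : ℝ) : Matrix (Fin 2) (Fin 2) ℝ :=
  nmat x * amat (Real.sqrt (z.1 ^ 2 + z.2 ^ 2))⁻¹ *
    !![(Real.sqrt (z.1 ^ 2 + z.2 ^ 2))⁻¹ * z.2, -((Real.sqrt (z.1 ^ 2 + z.2 ^ 2))⁻¹ * z.1);
       (Real.sqrt (z.1 ^ 2 + z.2 ^ 2))⁻¹ * z.1, (Real.sqrt (z.1 ^ 2 + z.2 ^ 2))⁻¹ * z.2]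

/-- The function `F₂` of Lemma 4.7. -/
def F2 (z₁ : ℝ) : ℝ :=
  (24 / Real.pi ^ 4) * ∫ z₂ in Set.Ioo (-z₁) z₁, ∫ w in Wp, ∫ x in Fdom,
    ind (latimage (bd (hz (z₁, z₂) x.1) (hz w x.2)) ∩ Tprime (z₁ ^ 2 * thetaHat) = ∅)

/-- The box `B(α₃,α₄)`. -/
def Bbox (α₃ α₄ : Zsqrtd 2) (C₁ s : ℝ) : Set (ℝ × ℝ) :=
  {x | |x.1 + emb α₄ / emb α₃| ≤ C₁ / Real.sqrt s ∧
       |x.2 + embc α₄ / embc α₃| ≤ C₁ / Real.sqrt s}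

/-- The matrix `h` determined by `s, z₂, w, x₁, x₂` via
`y₁⁻¹(sin θ₁, cos θ₁) = λ^{−2r}(θ̂^{−1/2}s^{1/2}, z₂)`, `y₂⁻¹(sin θ₂, cos θ₂) = λ^{2r}w`. -/
def hfull (s z₂ : ℝ) (w : ℝ × ℝ) (x₁ x₂ : ℝ) : Matrix (Fin 4) (Fin 4) ℝ :=
  bd (hz ((lam ^ (-(2 * rr s)) : ℝ) • (Real.sqrt (s / thetaHat), z₂)) x₁)
     (hz ((lam ^ (2 * rr s) : ℝ) • w) x₂)

/-- `F⁺_{(α₃,α₄)}(s)`. -/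
def Fplus (α₃ α₄ : Zsqrtd 2) (C₁ s : ℝ) : ℝ :=
  (Real.sqrt s)⁻¹ * ∫ z₂ in Set.Ioo (0:ℝ) (Real.sqrt (s / thetaHat)), ∫ w in Wp,
    ∫ x in Bbox α₃ α₄ C₁ s, ind (latimage (hfull s z₂ w x.1 x.2) ∩ calTs s = ∅)

/-- `F⁻_{(α₃,α₄)}(s)`. -/
def Fminus (α₃ α₄ : Zsqrtd 2) (C₁ s : ℝ) : ℝ :=
  (Real.sqrt s)⁻¹ * ∫ z₂ in Set.Ioo (-Real.sqrt (s / thetaHat)) (0:ℝ), ∫ w in Wp,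
    ∫ x in Bbox α₃ α₄ C₁ s, ind (latimage (hfull s z₂ w x.1 x.2) ∩ calTs s = ∅)

/-- `F_{(α₃,α₄)}(s)`. -/
def Ffull (α₃ α₄ : Zsqrtd 2) (C₁ s : ℝ) : ℝ :=
  (Real.sqrt s)⁻¹ *
    ∫ z₂ in Set.Ioo (-Real.sqrt (s / thetaHat)) (Real.sqrt (s / thetaHat)), ∫ w in Wp,
      ∫ x in Bbox α₃ α₄ C₁ s, ind (latimage (hfull s z₂ w x.1 x.2) ∩ calTs s = ∅)

/-- `v₁ = (α₃, α₄, σ(α₃), σ(α₄))`. -/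
def vv1 (α₃ α₄ : Zsqrtd 2) : Fin 4 → ℝ := ![emb α₃, emb α₄, embc α₃, embc α₄]

/-- `v₂ = (√2α₃, √2α₄, −√2σ(α₃), −√2σ(α₄))`. -/
def vv2 (α₃ α₄ : Zsqrtd 2) : Fin 4 → ℝ :=
  ![Real.sqrt 2 * emb α₃, Real.sqrt 2 * emb α₄,
    -(Real.sqrt 2 * embc α₃), -(Real.sqrt 2 * embc α₄)]

/-- `b₁ = (α₃, α₄, 0, 0)`. -/
def bb1 (α₃ α₄ : Zsqrtd 2) : Fin 4 → ℝ := ![emb α₃, emb α₄, 0, 0]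

/-- `b₂ = (0, 0, σ(α₃), σ(α₄))`. -/
def bb2 (α₃ α₄ : Zsqrtd 2) : Fin 4 → ℝ := ![0, 0, embc α₃, embc α₄]

/-- The subgrid `𝓛_v = v + ℤv₁ + ℤv₂`. -/
def Lv (α₃ α₄ : Zsqrtd 2) (v : Fin 4 → ℝ) : Set (Fin 4 → ℝ) :=
  {u | ∃ m n : ℤ, u = v + (m:ℝ) • vv1 α₃ α₄ + (n:ℝ) • vv2 α₃ α₄}

/-- The filled plane `Π_v = v + ℝb₁ + ℝb₂`. -/
def Piv (α₃ α₄ : Zsqrtd 2) (v : Fin 4 → ℝ) : Set (Fin 4 → ℝ) :=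
  {u | ∃ c₁ c₂ : ℝ, u = v + c₁ • bb1 α₃ α₄ + c₂ • bb2 α₃ α₄}

/-- `d(s) = θ̂^{−1/2}λ^{−2r}s^{1/2}`. -/
def ds (s : ℝ) : ℝ := lam ^ (-(2 * rr s)) * Real.sqrt (s / thetaHat)

/-- The explicit integral representation `Φ(s)` of the limiting gap distribution `F(s)`. -/
def Phi (s : ℝ) : ℝ :=
  (1 / ((2:ℝ) ^ ((11:ℝ)/2) * Real.sqrt thetaHat * zetaK2 * Real.sqrt s)) *
    ∫ z₂ in Set.Ioo (-Real.sqrt (s / thetaHat)) (Real.sqrt (s / thetaHat)), ∫ w in Wp,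
      ∫ x in Fdom, ind (latimage (hfull s z₂ w x.1 x.2) ∩ calTs s = ∅)


lemma sqrt2_sq : Real.sqrt 2 * Real.sqrt 2 = 2 := Real.mul_self_sqrt (by norm_num)

lemma sqrt2_gt : (1:ℝ) < Real.sqrt 2 := by
  nlinarith [sqrt2_sq, Real.sqrt_nonneg 2]

lemma emb_mul (α β : Zsqrtd 2) : emb (α * β) = emb α * emb β := by
  simp only [emb, Zsqrtd.re_mul, Zsqrtd.im_mul]
  push_cast
  linear_combination (-(α.im * β.im : ℝ)) * sqrt2_sq

lemma embc_mul (α β : Zsqrtd 2) : embc (α * β) = embc α * embc β := by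
  simp only [embc, Zsqrtd.re_mul, Zsqrtd.im_mul]
  push_cast
  linear_combination (-(α.im * β.im : ℝ)) * sqrt2_sq

lemma lam_sq : lam ^ 2 = 3 + 2 * Real.sqrt 2 := by
  simp only [lam]; linear_combination sqrt2_sq

lemma lam_sq_inv : (lam ^ 2)⁻¹ = 3 - 2 * Real.sqrt 2 := by
  rw [lam_sq]
  refine inv_eq_of_mul_eq_one_left ?_
  linear_combination (-4 : ℝ) * sqrt2_sq

lemma one_lt_lam_sq : (1:ℝ) < lam ^ 2 := by
  rw [lam_sq]; nlinarith [sqrt2_gt]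

lemma lam_sq_pos : (0:ℝ) < lam ^ 2 := lt_trans one_pos one_lt_lam_sq

/-- ε = 3 + 2√2 -/
def epsu : Zsqrtd 2 := ⟨3, 2⟩
/-- ε̄ = 3 − 2√2 -/
def epsb : Zsqrtd 2 := ⟨3, -2⟩

lemma emb_epsu : emb epsu = lam ^ 2 := by
  rw [lam_sq]; show ((3:ℤ):ℝ) + ((2:ℤ):ℝ) * Real.sqrt 2 = _; push_cast; ring

lemma embc_epsu : embc epsu = (lam ^ 2)⁻¹ := by
  rw [lam_sq_inv]; show ((3:ℤ):ℝ) - ((2:ℤ):ℝ) * Real.sqrt 2 = _; push_cast; ring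

lemma emb_epsb : emb epsb = (lam ^ 2)⁻¹ := by
  rw [lam_sq_inv]; show ((3:ℤ):ℝ) + ((-2:ℤ):ℝ) * Real.sqrt 2 = _; push_cast; ring

lemma embc_epsb : embc epsb = lam ^ 2 := by
  rw [lam_sq]; show ((3:ℤ):ℝ) - ((-2:ℤ):ℝ) * Real.sqrt 2 = _; push_cast; ring

lemma emb_epsu_pow (j : ℕ) :
    emb (epsu ^ j) = (lam ^ 2) ^ j ∧ embc (epsu ^ j) = ((lam ^ 2)⁻¹) ^ j := by
  induction j with
  | zero => simp [emb, embc]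
  | succ n ih =>
      rw [pow_succ, emb_mul, embc_mul, ih.1, ih.2, emb_epsu, embc_epsu,
        pow_succ, pow_succ]
      exact ⟨rfl, rfl⟩

lemma emb_epsb_pow (j : ℕ) :
    emb (epsb ^ j) = ((lam ^ 2)⁻¹) ^ j ∧ embc (epsb ^ j) = (lam ^ 2) ^ j := by
  induction j with
  | zero => simp [emb, embc]
  | succ n ih =>
      rw [pow_succ, emb_mul, embc_mul, ih.1, ih.2, emb_epsb, embc_epsb,
        pow_succ, pow_succ]
      exact ⟨rfl, rfl⟩

lemma unit_zpow (k : ℤ) :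
    ∃ u : Zsqrtd 2, emb u = (lam ^ 2) ^ k ∧ embc u = ((lam ^ 2) ^ k)⁻¹ := by
  rcases le_or_gt 0 k with hk | hk
  · refine ⟨epsu ^ k.toNat, ?_, ?_⟩
    · rw [(emb_epsu_pow k.toNat).1, ← zpow_natCast, Int.toNat_of_nonneg hk]
    · rw [(emb_epsu_pow k.toNat).2, inv_pow, ← zpow_natCast, Int.toNat_of_nonneg hk]
  · refine ⟨epsb ^ (-k).toNat, ?_, ?_⟩
    · rw [(emb_epsb_pow (-k).toNat).1, inv_pow, ← zpow_natCast,
        Int.toNat_of_nonneg (by omega), _root_.zpow_neg, inv_inv]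
    · rw [(emb_epsb_pow (-k).toNat).2, ← zpow_natCast,
        Int.toNat_of_nonneg (by omega), ← _root_.zpow_neg]

/-- The key unscaled case: any box with both sides at least `2 + 2√2` contains a point
of the Minkowski embedding. -/
lemma boxA (a₁ b₁ a₂ b₂ : ℝ) (h₁ : 2 + 2 * Real.sqrt 2 ≤ b₁ - a₁)
    (h₂ : 2 + 2 * Real.sqrt 2 ≤ b₂ - a₂) :
    ∃ α : Zsqrtd 2, a₁ < emb α ∧ emb α < b₁ ∧ a₂ < embc α ∧ embc α < b₂ := by
  have hs2 : (0:ℝ) < Real.sqrt 2 := lt_trans one_pos sqrt2_gt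
  set c₁ := (a₁ + b₁) / 2 with hc₁
  set c₂ := (a₂ + b₂) / 2 with hc₂
  set n : ℤ := round ((c₁ - c₂) / (2 * Real.sqrt 2)) with hn
  have hround : |(c₁ - c₂) / (2 * Real.sqrt 2) - (n:ℝ)| ≤ 1/2 := abs_sub_round _
  have habs : |c₁ - c₂ - 2 * Real.sqrt 2 * n| ≤ Real.sqrt 2 := by
    have h2s : (0:ℝ) < 2 * Real.sqrt 2 := by positivity
    have key : |2 * Real.sqrt 2 * ((c₁ - c₂) / (2 * Real.sqrt 2) - (n:ℝ))| ≤
        2 * Real.sqrt 2 * (1/2) := by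
      rw [abs_mul, abs_of_pos h2s]
      exact mul_le_mul_of_nonneg_left hround h2s.le
    calc |c₁ - c₂ - 2 * Real.sqrt 2 * n| = |2 * Real.sqrt 2 * ((c₁ - c₂) / (2 * Real.sqrt 2) - n)| := by
          rw [mul_sub, mul_div_cancel₀ _ (ne_of_gt h2s)]
      _ ≤ 2 * Real.sqrt 2 * (1/2) := key
      _ = Real.sqrt 2 := by ring
  have habs' : -Real.sqrt 2 ≤ c₁ - c₂ - 2 * Real.sqrt 2 * n ∧
      c₁ - c₂ - 2 * Real.sqrt 2 * n ≤ Real.sqrt 2 := abs_le.mp habs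
  set lo : ℝ := max (a₁ - n * Real.sqrt 2) (a₂ + n * Real.sqrt 2) with hlo
  set m : ℤ := ⌊lo⌋ + 1 with hm
  have hlolt : lo < m := by
    have := Int.lt_floor_add_one lo
    push_cast [hm]; linarith
  have hmle : (m:ℝ) ≤ lo + 1 := by
    have := Int.floor_le lo
    push_cast [hm]; linarith
  have hl1 : a₁ - n * Real.sqrt 2 ≤ lo := le_max_left _ _
  have hl2 : a₂ + n * Real.sqrt 2 ≤ lo := le_max_right _ _
  have hhi1 : lo + 1 < b₁ - n * Real.sqrt 2 := by
    rcases max_cases (a₁ - n * Real.sqrt 2) (a₂ + n * Real.sqrt 2) with ⟨he, _⟩ | ⟨he, _⟩ <;>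
      rw [hlo, he] <;> [skip; simp only [hc₁, hc₂] at habs'] <;> nlinarith [habs'.1, habs'.2, sqrt2_gt]
  have hhi2 : lo + 1 < b₂ + n * Real.sqrt 2 := by
    rcases max_cases (a₁ - n * Real.sqrt 2) (a₂ + n * Real.sqrt 2) with ⟨he, _⟩ | ⟨he, _⟩ <;>
      rw [hlo, he] <;> [simp only [hc₁, hc₂] at habs'; skip] <;> nlinarith [habs'.1, habs'.2, sqrt2_gt]
  refine ⟨⟨m, n⟩, ?_, ?_, ?_, ?_⟩ <;>
    simp only [emb, embc, Zsqrtd.ext_iff] <;> push_cast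
  · linarith [lt_of_le_of_lt hl1 hlolt]
  · linarith [lt_of_le_of_lt hmle hhi1]
  · linarith [lt_of_le_of_lt hl2 hlolt]
  · linarith [lt_of_le_of_lt hmle hhi2]

/-- the Minkowski embedding of ℤ[√2] meets every open box of area ≥ C. -/
theorem stmt0 : ∃ C > (0:ℝ), ∀ a₁ b₁ a₂ b₂ : ℝ, a₁ < b₁ → a₂ < b₂ →
    C ≤ (b₁ - a₁) * (b₂ - a₂) →
    ∃ α : Zsqrtd 2, a₁ < emb α ∧ emb α < b₁ ∧ a₂ < embc α ∧ embc α < b₂ := by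
  have hs2 : (0:ℝ) < Real.sqrt 2 := lt_trans one_pos sqrt2_gt
  set K : ℝ := 2 + 2 * Real.sqrt 2 with hK
  have hKpos : 0 < K := by positivity
  set S : ℝ := lam ^ 2 * K with hS
  have hSpos : 0 < S := mul_pos lam_sq_pos hKpos
  refine ⟨S ^ 2, by positivity, ?_⟩
  intro a₁ b₁ a₂ b₂ hab₁ hab₂ hC
  set L₁ : ℝ := b₁ - a₁ with hL₁
  set L₂ : ℝ := b₂ - a₂ with hL₂
  have hL₁pos : 0 < L₁ := by simp [hL₁]; linarith
  have hL₂pos : 0 < L₂ := by simp [hL₂]; linarith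
  set x : ℝ := L₁ / S with hx
  have hxpos : 0 < x := div_pos hL₁pos hSpos
  set k : ℤ := ⌊Real.logb (lam ^ 2) x⌋ with hk
  set t : ℝ := (lam ^ 2) ^ k with ht
  have htpos : 0 < t := zpow_pos lam_sq_pos k
  -- bounds t ≤ x < t * lam^2
  have hblog : (lam ^ 2) ^ Real.logb (lam ^ 2) x = x :=
    Real.rpow_logb lam_sq_pos (ne_of_gt one_lt_lam_sq) hxpos
  have hk1 : t ≤ x := by
    have h1 : ((k:ℝ)) ≤ Real.logb (lam ^ 2) x := Int.floor_le _
    have h2 : (lam ^ 2) ^ ((k:ℝ)) ≤ (lam ^ 2) ^ Real.logb (lam ^ 2) x :=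
      Real.rpow_le_rpow_left_iff one_lt_lam_sq |>.mpr h1
    rwa [Real.rpow_intCast, hblog] at h2
  have hk2 : x < t * lam ^ 2 := by
    have h1 : Real.logb (lam ^ 2) x < (k:ℝ) + 1 := Int.lt_floor_add_one _
    have h2 : (lam ^ 2) ^ Real.logb (lam ^ 2) x < (lam ^ 2) ^ ((k:ℝ) + 1) :=
      Real.rpow_lt_rpow_left_iff one_lt_lam_sq |>.mpr h1
    rw [hblog] at h2
    have : (lam ^ 2) ^ ((k:ℝ) + 1) = t * lam ^ 2 := by
      rw [show ((k:ℝ) + 1) = ((k + 1 : ℤ) : ℝ) by push_cast; ring, Real.rpow_intCast,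
        zpow_add_one₀ (ne_of_gt lam_sq_pos)]
    rwa [this] at h2
  -- scaled side lengths
  have hside1 : K ≤ b₁ / t - a₁ / t := by
    have : S * t ≤ L₁ := by
      rw [hx] at hk1
      calc S * t ≤ S * (L₁ / S) := by nlinarith
        _ = L₁ := by field_simp
    have hKS : K * t ≤ L₁ := by
      have hKleS : K ≤ S := by nlinarith [one_lt_lam_sq]
      nlinarith
    rw [div_sub_div_same, ← hL₁, le_div_iff₀ htpos]; linarith
  have hside2 : K ≤ b₂ * t - a₂ * t := by
    have h1 : L₁ < S * lam ^ 2 * t := by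
      rw [hx] at hk2
      calc L₁ = S * (L₁ / S) := by field_simp
        _ < S * (t * lam ^ 2) := by nlinarith
        _ = S * lam ^ 2 * t := by ring
    have h2 : S ^ 2 ≤ L₁ * L₂ := hC
    -- L₂ * t ≥ S^2 * t / L₁ > S^2 / (S * lam^2) = K
    have h3 : K * L₁ ≤ L₂ * t * L₁ := by
      have hSK : S ^ 2 = S * lam ^ 2 * K := by rw [hS]; ring
      nlinarith
    have h4 : K ≤ L₂ * t := le_of_mul_le_mul_right (by linarith) hL₁pos
    rw [← sub_mul, ← hL₂]; linarith
  obtain ⟨α', h1, h2, h3, h4⟩ := boxA (a₁ / t) (b₁ / t) (a₂ * t) (b₂ * t)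
    (by rw [← hK]; linarith) (by rw [← hK]; linarith)
  obtain ⟨u, hu1, hu2⟩ := unit_zpow k
  refine ⟨α' * u, ?_, ?_, ?_, ?_⟩
  · rw [emb_mul, hu1, ← ht]; exact (div_lt_iff₀ htpos).mp h1
  · rw [emb_mul, hu1, ← ht]; exact (lt_div_iff₀ htpos).mp h2
  · rw [embc_mul, hu2, ← ht, ← div_eq_mul_inv]; exact (lt_div_iff₀ htpos).mpr h3
  · rw [embc_mul, hu2, ← ht, ← div_eq_mul_inv]; exact (div_lt_iff₀ htpos).mpr h4

end
end

section
/- For every t > 0 there exists a constant c > 0 such that: if h = h(x₁,x₂,y₁,y₂,θ₁,θ₂) ∈ 𝔇_t and there exist p ∈ ℝ⁴ and R > 0 such that 𝓛h contains no point of the open Euclidean ball of radius R centered at p, then y₁ ≥ cR and y₂ ≥ cR. -/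
open MeasureTheory Matrix Set Pointwise

noncomputable section

lemma cover (u v : ℝ) : ∃ α : Zsqrtd 2, |emb α - u| ≤ 2 ∧ |embc α - v| ≤ 2 := by
  have h2 : Real.sqrt 2 ^ 2 = 2 := Real.sq_sqrt (by norm_num)
  have h2' : (0:ℝ) < Real.sqrt 2 := Real.sqrt_pos.mpr (by norm_num)
  have h2'' : Real.sqrt 2 ≤ 3/2 := by nlinarith
  have key : Real.sqrt 2 * ((u-v)/(2*Real.sqrt 2)) = (u-v)/2 := by
    field_simp
  refine ⟨⟨round ((u+v)/2), round ((u-v)/(2*Real.sqrt 2))⟩, ?_, ?_⟩ <;>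
  · have ha := abs_sub_round ((u+v)/2)
    have hb := abs_sub_round ((u-v)/(2*Real.sqrt 2))
    have hb2 : |Real.sqrt 2 * (round ((u-v)/(2*Real.sqrt 2)) : ℝ) - (u-v)/2| ≤ 3/4 := by
      rw [← key, ← mul_sub, abs_mul, abs_of_pos h2']
      calc Real.sqrt 2 * |(round ((u-v)/(2*Real.sqrt 2)) : ℝ) - (u-v)/(2*Real.sqrt 2)|
          ≤ (3/2) * (1/2) := by
            rw [abs_sub_comm] at hb
            apply mul_le_mul h2'' hb (abs_nonneg _) (by norm_num)
        _ = 3/4 := by norm_num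
    simp only [emb, embc]
    rw [abs_le] at *
    constructor <;> linarith [hb2.1, hb2.2, ha.1, ha.2]

lemma vec_comp (β₁ β₂ : Zsqrtd 2) (x₁ x₂ y₁ y₂ θ₁ θ₂ : ℝ) :
    Matrix.vecMul (latvec β₁ β₂) (hmat x₁ x₂ y₁ y₂ θ₁ θ₂) =
    ![emb β₁ * (y₁*Real.cos θ₁ + x₁*Real.sin θ₁/y₁) + emb β₂ * (Real.sin θ₁/y₁),
      emb β₁ * (-(y₁*Real.sin θ₁) + x₁*Real.cos θ₁/y₁) + emb β₂ * (Real.cos θ₁/y₁),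
      embc β₁ * (y₂*Real.cos θ₂ + x₂*Real.sin θ₂/y₂) + embc β₂ * (Real.sin θ₂/y₂),
      embc β₁ * (-(y₂*Real.sin θ₂) + x₂*Real.cos θ₂/y₂) + embc β₂ * (Real.cos θ₂/y₂)] := by
  funext i
  fin_cases i <;>
  · simp [hmat, bd, nmat, amat, kmat, latvec, Matrix.vecMul, dotProduct,
      Fin.sum_univ_four, Matrix.mul_apply, Fin.sum_univ_two, Matrix.vecHead, Matrix.vecTail]
    ring

lemma plane_bound (y x c s p0 p1 e1 e2 : ℝ) (hy : 0 < y) (hpyth : s^2+c^2 = 1)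
    (hA : |e1 - (p0*c - p1*s)/y| ≤ 2) (hC : |e2 - ((p0*s + p1*c)*y - e1*x)| ≤ 2) :
    (e1*(y*c + x*s/y) + e2*(s/y) - p0)^2 + (e1*(-(y*s) + x*c/y) + e2*(c/y) - p1)^2
      ≤ 4*y^2 + 4/y^2 := by
  have hy' : y ≠ 0 := ne_of_gt hy
  rw [abs_le] at hA hC
  have h1 : (e1 - (p0*c - p1*s)/y)^2 ≤ 4 := by nlinarith [hA.1, hA.2]
  have h2 : (e2 - ((p0*s + p1*c)*y - e1*x))^2 ≤ 4 := by nlinarith [hC.1, hC.2]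
  have key : (e1*(y*c + x*s/y) + e2*(s/y) - p0)^2 + (e1*(-(y*s) + x*c/y) + e2*(c/y) - p1)^2
      = (e1*y - (p0*c - p1*s))^2 + ((e1*x+e2)/y - (p0*s + p1*c))^2 := by
    linear_combination ((e1*y)^2 + ((e1*x+e2)/y)^2 - p0^2 - p1^2) * hpyth
  rw [key]
  have e0 : e1*y - (p0*c - p1*s) = y*(e1 - (p0*c - p1*s)/y) := by field_simp
  have e1' : (e1*x+e2)/y - (p0*s + p1*c) = (e2 - ((p0*s + p1*c)*y - e1*x))/y := by
    field_simp; ring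
  rw [e0, e1']
  have b1 : (y*(e1 - (p0*c - p1*s)/y))^2 ≤ 4*y^2 := by
    nlinarith [mul_le_mul_of_nonneg_left h1 (sq_nonneg y)]
  have b2 : ((e2 - ((p0*s + p1*c)*y - e1*x))/y)^2 ≤ 4/y^2 := by
    rw [div_pow]
    exact div_le_div_of_nonneg_right h2 (by positivity)
  linarith

lemma enorm4_sub (p : Fin 4 → ℝ) (a b c d : ℝ) :
    enorm4 (![a,b,c,d] - p) =
    Real.sqrt ((a - p 0)^2 + (b - p 1)^2 + (c - p 2)^2 + (d - p 3)^2) := by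
  unfold enorm4
  congr 1
  rw [Fin.sum_univ_four]
  simp [Pi.sub_apply]

set_option maxHeartbeats 1000000 in
theorem stmt2 : ∀ t > (0:ℝ), ∃ c > (0:ℝ), ∀ x₁ x₂ y₁ y₂ θ₁ θ₂ : ℝ,
    (x₁, x₂) ∈ Fdom → 0 < y₁ → 0 < y₂ → t ≤ y₁ * y₂ →
    lam ^ (-2:ℤ) ≤ y₁ / y₂ → y₁ / y₂ ≤ lam ^ 2 →
    θ₁ ∈ Set.Ico 0 Real.pi → θ₂ ∈ Set.Ico 0 Real.pi →
    ∀ (p : Fin 4 → ℝ) (R : ℝ), 0 < R →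
      (∀ v ∈ latimage (hmat x₁ x₂ y₁ y₂ θ₁ θ₂), R ≤ enorm4 (v - p)) →
      c * R ≤ y₁ ∧ c * R ≤ y₂ := by
  intro t ht
  have hlam : (1:ℝ) ≤ lam := by
    have := Real.sqrt_nonneg 2
    simp only [lam]; linarith
  have hlamp : (0:ℝ) < lam := by linarith
  obtain ⟨K, hK⟩ : ∃ K : ℝ, K = 5 + 4*lam^4 + 4*lam^4/t^2 + 4*lam^8/t^2 := ⟨_, rfl⟩
  have hK1 : 1 ≤ K := by
    rw [hK]
    have h1 : 0 ≤ 4*lam^4 := by positivity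
    have h2 : 0 ≤ 4*lam^4/t^2 := by positivity
    have h3 : 0 ≤ 4*lam^8/t^2 := by positivity
    linarith
  have hKpos : 0 < K := by linarith
  refine ⟨K⁻¹, by positivity, ?_⟩
  intro x₁ x₂ y₁ y₂ θ₁ θ₂ hx hy₁ hy₂ hty hr1 hr2 hθ₁ hθ₂ p R hR hmiss
  have hy₁' : y₁ ≠ 0 := ne_of_gt hy₁
  have hy₂' : y₂ ≠ 0 := ne_of_gt hy₂
  -- ratio facts
  have hrat1 : y₂ ≤ lam^2 * y₁ := by
    have h0 : lam ^ (-2:ℤ) * y₂ ≤ y₁ := by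
      rw [le_div_iff₀ hy₂] at hr1; linarith
    have hz : (lam:ℝ) ^ (-2:ℤ) = (lam^2)⁻¹ := by
      rw [_root_.zpow_neg]; congr 1
    rw [hz] at h0
    have hL : (0:ℝ) < lam^2 := by positivity
    have := mul_le_mul_of_nonneg_left h0 hL.le
    rw [← mul_assoc, mul_inv_cancel₀ (ne_of_gt hL), one_mul] at this
    linarith
  have hrat2 : y₁ ≤ lam^2 * y₂ := by
    rw [div_le_iff₀ hy₂] at hr2; linarith
  have hty1 : t ≤ lam^2 * y₁^2 := by nlinarith
  have hty2 : t ≤ lam^2 * y₂^2 := by nlinarith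
  -- inverse-square bounds
  have hinv1 : 4/y₁^2 ≤ 4*lam^4*y₁^2/t^2 := by
    rw [div_le_div_iff₀ (by positivity) (by positivity)]
    nlinarith [mul_le_mul hty1 hty1 ht.le (by positivity : (0:ℝ) ≤ lam^2*y₁^2)]
  have hinv2 : 4/y₂^2 ≤ 4*lam^4*y₂^2/t^2 := by
    rw [div_le_div_iff₀ (by positivity) (by positivity)]
    nlinarith [mul_le_mul hty2 hty2 ht.le (by positivity : (0:ℝ) ≤ lam^2*y₂^2)]
  have hyy1 : y₂^2 ≤ lam^4*y₁^2 := by nlinarith [hrat1, hy₂, hy₁, hlamp]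
  have hyy2 : y₁^2 ≤ lam^4*y₂^2 := by nlinarith [hrat2, hy₂, hy₁, hlamp]
  have hUB1 : 4*y₁^2 + 4/y₁^2 + 4*y₂^2 + 4/y₂^2 ≤ K * y₁^2 := by
    have e1' : 4*lam^4*y₂^2/t^2 ≤ 4*lam^8*y₁^2/t^2 := by
      apply div_le_div_of_nonneg_right _ (by positivity)
      nlinarith [mul_le_mul_of_nonneg_left hyy1 (by positivity : (0:ℝ) ≤ 4*lam^4)]
    rw [hK]
    have expand : (5 + 4*lam^4 + 4*lam^4/t^2 + 4*lam^8/t^2) * y₁^2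
        = 5*y₁^2 + 4*lam^4*y₁^2 + (4*lam^4*y₁^2/t^2 + 4*lam^8*y₁^2/t^2) := by ring
    rw [expand]
    have h4 : 4*y₂^2 ≤ 4*lam^4*y₁^2 := by linarith [hyy1]
    linarith [hinv1, hinv2, e1', sq_nonneg y₁, h4]
  have hUB2 : 4*y₁^2 + 4/y₁^2 + 4*y₂^2 + 4/y₂^2 ≤ K * y₂^2 := by
    have e1' : 4*lam^4*y₁^2/t^2 ≤ 4*lam^8*y₂^2/t^2 := by
      apply div_le_div_of_nonneg_right _ (by positivity)
      nlinarith [mul_le_mul_of_nonneg_left hyy2 (by positivity : (0:ℝ) ≤ 4*lam^4)]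
    rw [hK]
    have expand : (5 + 4*lam^4 + 4*lam^4/t^2 + 4*lam^8/t^2) * y₂^2
        = 5*y₂^2 + 4*lam^4*y₂^2 + (4*lam^4*y₂^2/t^2 + 4*lam^8*y₂^2/t^2) := by ring
    rw [expand]
    have h4 : 4*y₁^2 ≤ 4*lam^4*y₂^2 := by linarith [hyy2]
    linarith [hinv1, hinv2, e1', sq_nonneg y₂, h4]
  have pyth1 : Real.sin θ₁^2 + Real.cos θ₁^2 = 1 := Real.sin_sq_add_cos_sq θ₁
  have pyth2 : Real.sin θ₂^2 + Real.cos θ₂^2 = 1 := Real.sin_sq_add_cos_sq θ₂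
  obtain ⟨β₁, hA, hB⟩ := cover ((p 0 * Real.cos θ₁ - p 1 * Real.sin θ₁)/y₁)
    ((p 2 * Real.cos θ₂ - p 3 * Real.sin θ₂)/y₂)
  obtain ⟨β₂, hC, hD⟩ := cover ((p 0 * Real.sin θ₁ + p 1 * Real.cos θ₁)*y₁ - emb β₁*x₁)
    ((p 2 * Real.sin θ₂ + p 3 * Real.cos θ₂)*y₂ - embc β₁*x₂)
  have hmem : Matrix.vecMul (latvec β₁ β₂) (hmat x₁ x₂ y₁ y₂ θ₁ θ₂)
      ∈ latimage (hmat x₁ x₂ y₁ y₂ θ₁ θ₂) := ⟨latvec β₁ β₂, ⟨β₁, β₂, rfl⟩, rfl⟩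
  have hRle := hmiss _ hmem
  rw [vec_comp, enorm4_sub] at hRle
  -- the two plane bounds
  have pb1 := plane_bound y₁ x₁ (Real.cos θ₁) (Real.sin θ₁) (p 0) (p 1)
    (emb β₁) (emb β₂) hy₁ pyth1 hA hC
  have pb2 := plane_bound y₂ x₂ (Real.cos θ₂) (Real.sin θ₂) (p 2) (p 3)
    (embc β₁) (embc β₂) hy₂ pyth2 hB hD
  set T := (emb β₁ * (y₁*Real.cos θ₁ + x₁*Real.sin θ₁/y₁) + emb β₂ * (Real.sin θ₁/y₁) - p 0)^2
    + (emb β₁ * (-(y₁*Real.sin θ₁) + x₁*Real.cos θ₁/y₁) + emb β₂ * (Real.cos θ₁/y₁) - p 1)^2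
    + (embc β₁ * (y₂*Real.cos θ₂ + x₂*Real.sin θ₂/y₂) + embc β₂ * (Real.sin θ₂/y₂) - p 2)^2
    + (embc β₁ * (-(y₂*Real.sin θ₂) + x₂*Real.cos θ₂/y₂) + embc β₂ * (Real.cos θ₂/y₂) - p 3)^2
    with hT
  have hTnn : (0:ℝ) ≤ T := by positivity
  have hTle : T ≤ 4*y₁^2 + 4/y₁^2 + 4*y₂^2 + 4/y₂^2 := by
    rw [hT]; linarith [pb1, pb2]
  have hR2 : R^2 ≤ T := by
    have h := pow_le_pow_left₀ hR.le hRle 2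
    rwa [Real.sq_sqrt hTnn] at h
  have hS1 : T ≤ K * y₁^2 := le_trans hTle hUB1
  have hS2 : T ≤ K * y₂^2 := le_trans hTle hUB2
  clear hmiss hRle pb1 pb2 hTle hA hB hC hD hx hT
  have key : ∀ y : ℝ, 0 < y → T ≤ K * y^2 → K⁻¹ * R ≤ y := by
    intro y hy hSy
    have h1 : R^2 ≤ (K*y)^2 := by
      calc R^2 ≤ T := hR2
        _ ≤ K*y^2 := hSy
        _ ≤ (K*y)^2 := by nlinarith [hK1, hy, sq_nonneg y]
    have h2 : R ≤ K*y := by nlinarith [h1, hR, mul_pos hKpos hy]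
    calc K⁻¹ * R ≤ K⁻¹ * (K*y) := by
          apply mul_le_mul_of_nonneg_left h2 (by positivity)
      _ = y := by field_simp
  exact ⟨key y₁ hy₁ hS1, key y₂ hy₂ hS2⟩

end
end

section
/- Let s > 0 and let h = h(x₁,x₂,y₁,y₂,θ₁,θ₂) with x₁,x₂ ∈ ℝ, y₁,y₂ > 0 and θ₁,θ₂ ∈ ℝ. Let L₁(θ₁) ⊂ ℝ be the image of the set λ^{−2r(s)}T(s)·k(−θ₁) under projection onto the first coordinate, and let L₂(θ₂) ⊂ ℝ be the image of λ^{2r(s)}𝒲·k(−θ₂) under projection onto the first coordinate. Then 𝓛h̃ ∩ 𝒯(s) = ∅ if and only if 𝓛' ∩ (y₁⁻¹L₁(θ₁) × y₂⁻¹L₂(θ₂)) = ∅. -/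
/-! A point of `𝓛h̃` is `(αy₁, c₁, σ(α)y₂, c₂)·diag(k(θ₁), k(θ₂))` with `α ∈ ℤ[√2]` and `c₁, c₂`
free, so it lies in `𝒯(s)` iff the vertical line `{x = αy₁}` meets `λ^{−2r}T(s)k(−θ₁)` and the
line `{x = σ(α)y₂}` meets `λ^{2r}𝒲k(−θ₂)`. A vertical line meets a set exactly when its abscissa
lies in the projection of that set to the first coordinate. -/

open MeasureTheory Matrix Set Pointwise

noncomputable section

lemma lam_pos : 0 < lam := by
  unfold lam
  positivity

lemma mul2_kmat_mul2_kmat_neg (p : ℝ × ℝ) (θ : ℝ) :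
    mul2 (mul2 p (kmat θ)) (kmat (-θ)) = p := by
  obtain ⟨p₁, p₂⟩ := p
  simp only [mul2, kmat, Real.cos_neg, Real.sin_neg, of_apply, cons_val', cons_val_zero,
    cons_val_one, empty_val', cons_val_fin_one, Prod.mk.injEq]
  constructor
  · linear_combination p₁ * Real.sin_sq_add_cos_sq θ
  · linear_combination p₂ * Real.sin_sq_add_cos_sq θ

lemma mul2_kmat_neg_mul2_kmat (p : ℝ × ℝ) (θ : ℝ) :
    mul2 (mul2 p (kmat (-θ))) (kmat θ) = p := by
  simpa only [neg_neg] using mul2_kmat_mul2_kmat_neg p (-θ)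

lemma exists_mul2_kmat_mem_iff (S : Set (ℝ × ℝ)) (θ a : ℝ) :
    (∃ c, mul2 (a, c) (kmat θ) ∈ S) ↔ ∃ q ∈ S, a = (mul2 q (kmat (-θ))).1 := by
  constructor
  · rintro ⟨c, hc⟩
    exact ⟨_, hc, by rw [mul2_kmat_mul2_kmat_neg]⟩
  · rintro ⟨q, hq, rfl⟩
    exact ⟨(mul2 q (kmat (-θ))).2, by rwa [mul2_kmat_neg_mul2_kmat]⟩

lemma exists_smul_mul2_kmat_mem_iff {u : ℝ} (hu : u ≠ 0) (S : Set (ℝ × ℝ)) (θ a : ℝ) :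
    (∃ c, u • mul2 (a, c) (kmat θ) ∈ S) ↔ ∃ p ∈ S, a = (mul2 (u⁻¹ • p) (kmat (-θ))).1 := by
  simp_rw [← mem_inv_smul_set_iff₀ hu, exists_mul2_kmat_mem_iff, mem_smul_set]
  constructor
  · rintro ⟨_, ⟨p, hp, rfl⟩, ha⟩
    exact ⟨p, hp, ha⟩
  · rintro ⟨p, hp, ha⟩
    exact ⟨_, ⟨p, hp, rfl⟩, ha⟩

lemma vecMul_bd_mem_calT_iff (s : ℝ) (r : ℤ) (A B : Matrix (Fin 2) (Fin 2) ℝ)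
    (a c₁ b c₂ : ℝ) :
    vecMul ![a, c₁, b, c₂] (bd A B) ∈ calT s r ↔
      lam ^ (2*r) • mul2 (a, c₁) A ∈ Tset s ∧ lam ^ (-(2*r)) • mul2 (b, c₂) B ∈ Woct := by
  simp [calT, bd, mul2]

lemma mem_L1set_iff (s : ℝ) (r : ℤ) (θ a : ℝ) :
    a ∈ L1set s r θ ↔ ∃ c, lam ^ (2*r) • mul2 (a, c) (kmat θ) ∈ Tset s := by
  rw [exists_smul_mul2_kmat_mem_iff (zpow_ne_zero _ lam_pos.ne'), ← _root_.zpow_neg]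
  rfl

lemma mem_L2set_iff (r : ℤ) (θ a : ℝ) :
    a ∈ L2set r θ ↔ ∃ c, lam ^ (-(2*r)) • mul2 (a, c) (kmat θ) ∈ Woct := by
  rw [exists_smul_mul2_kmat_mem_iff (zpow_ne_zero _ lam_pos.ne'), ← _root_.zpow_neg, neg_neg]
  rfl

lemma Ltilde_inter_calT_nonempty_iff (s : ℝ) (r : ℤ) (y₁ y₂ θ₁ θ₂ : ℝ) :
    (Ltilde y₁ y₂ θ₁ θ₂ ∩ calT s r).Nonempty ↔
      ∃ α : Zsqrtd 2, y₁ * emb α ∈ L1set s r θ₁ ∧ y₂ * embc α ∈ L2set r θ₂ := by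
  simp_rw [mem_L1set_iff, mem_L2set_iff, mul_comm y₁, mul_comm y₂]
  constructor
  · rintro ⟨_, ⟨m, n, c₁, c₂, rfl⟩, hT⟩
    obtain ⟨h₁, h₂⟩ := (vecMul_bd_mem_calT_iff ..).1 hT
    exact ⟨⟨m, n⟩, ⟨c₁, h₁⟩, ⟨c₂, h₂⟩⟩
  · rintro ⟨α, ⟨c₁, h₁⟩, ⟨c₂, h₂⟩⟩
    exact ⟨_, ⟨α.re, α.im, c₁, c₂, rfl⟩, (vecMul_bd_mem_calT_iff ..).2 ⟨h₁, h₂⟩⟩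

lemma Lp_inter_inv_smul_prod_nonempty_iff {y₁ y₂ : ℝ} (hy₁ : y₁ ≠ 0) (hy₂ : y₂ ≠ 0)
    (A B : Set ℝ) :
    (Lp ∩ (y₁⁻¹ • A) ×ˢ (y₂⁻¹ • B)).Nonempty ↔
      ∃ α : Zsqrtd 2, y₁ * emb α ∈ A ∧ y₂ * embc α ∈ B := by
  simp only [Set.Nonempty, mem_inter_iff, mem_prod, mem_inv_smul_set_iff₀ hy₁,
    mem_inv_smul_set_iff₀ hy₂, smul_eq_mul]
  constructor
  · rintro ⟨_, ⟨α, rfl⟩, h⟩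
    exact ⟨α, h⟩
  · rintro ⟨α, h⟩
    exact ⟨_, ⟨α, rfl⟩, h⟩

theorem stmt4_general (s : ℝ) (r : ℤ)
    (y₁ y₂ : ℝ) (hy₁ : 0 < y₁) (hy₂ : 0 < y₂) (θ₁ θ₂ : ℝ) :
    Ltilde y₁ y₂ θ₁ θ₂ ∩ calT s r = ∅ ↔
      Lp ∩ ((y₁⁻¹ • L1set s r θ₁) ×ˢ (y₂⁻¹ • L2set r θ₂)) = ∅ := by
  rw [← not_nonempty_iff_eq_empty, ← not_nonempty_iff_eq_empty, not_iff_not,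
    Ltilde_inter_calT_nonempty_iff, Lp_inter_inv_smul_prod_nonempty_iff hy₁.ne' hy₂.ne']

theorem stmt4 (s : ℝ) (hs : 0 < s) (r : ℤ)
    (hr₁ : lam ^ (2*r) ≤ s ^ ((1:ℝ)/4)) (hr₂ : s ^ ((1:ℝ)/4) < lam ^ (2*r+2))
    (y₁ y₂ : ℝ) (hy₁ : 0 < y₁) (hy₂ : 0 < y₂) (θ₁ θ₂ : ℝ) :
    Ltilde y₁ y₂ θ₁ θ₂ ∩ calT s r = ∅ ↔
      Lp ∩ ((y₁⁻¹ • L1set s r θ₁) ×ˢ (y₂⁻¹ • L2set r θ₂)) = ∅ :=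
  stmt4_general s r y₁ y₂ hy₁ hy₂ θ₁ θ₂

end
end

section
/- Let α₃, α₄ ∈ ℤ[√2] be coprime with α₃ > 0, and let C₁ > 0. For s > 0 define F⁺_{(α₃,α₄)}(s) = s^{−1/2} ∫_{0}^{θ̂^{−1/2}s^{1/2}} ∫_{𝒲'} ∫_{B(α₃,α₄)} 1[𝓛h ∩ 𝒯(s) = ∅] dx₁ dx₂ dw dz₂ and F⁻_{(α₃,α₄)}(s) = s^{−1/2} ∫_{−θ̂^{−1/2}s^{1/2}}^{0} ∫_{𝒲'} ∫_{B(α₃,α₄)} 1[𝓛h ∩ 𝒯(s) = ∅] dx₁ dx₂ dw dz₂. Then for every s > 0: F⁻_{(α₃,α₄)}(s) = F⁺_{(α₃,−α₄)}(s). -/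
open MeasureTheory Matrix Set Pointwise

noncomputable section

section Stmt12Aux

lemma emb_neg' (α : Zsqrtd 2) : emb (-α) = -emb α := by
  simp [emb]; ring

lemma embc_neg' (α : Zsqrtd 2) : embc (-α) = -embc α := by
  simp [embc]; ring

lemma smul_pair' (c : ℝ) (p : ℝ × ℝ) : c • p = (c * p.1, c * p.2) := by
  ext <;> simp

lemma vecMul_bd' (u : Fin 4 → ℝ) (A B : Matrix (Fin 2) (Fin 2) ℝ) :
    Matrix.vecMul u (bd A B) =
    ![u 0 * A 0 0 + u 1 * A 1 0, u 0 * A 0 1 + u 1 * A 1 1,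
      u 2 * B 0 0 + u 3 * B 1 0, u 2 * B 0 1 + u 3 * B 1 1] := by
  funext j
  fin_cases j <;>
    simp [Matrix.vecMul, bd, dotProduct, Fin.sum_univ_four, Matrix.vecHead,
      Matrix.vecTail]

lemma hz_neg' (a b x : ℝ) :
    hz (a, -b) (-x) = !![-(hz (a,b) x 0 0), hz (a,b) x 0 1;
                         hz (a,b) x 1 0, -(hz (a,b) x 1 1)] := by
  have h : ((-b:ℝ))^2 = b^2 := by ring
  ext i j
  fin_cases i <;> fin_cases j <;>
    · simp [hz, nmat, amat, Matrix.mul_apply, Fin.sum_univ_two, h]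
      try ring

lemma ind_congr {P Q : Prop} (h : P ↔ Q) : ind P = ind Q := by
  unfold ind
  by_cases hP : P
  · rw [if_pos hP, if_pos (h.mp hP)]
  · rw [if_neg hP, if_neg fun hq => hP (h.mpr hq)]

/-- The sign-flip involution on `ℝ⁴`. -/
def phi4 (v : Fin 4 → ℝ) : Fin 4 → ℝ := ![v 0, -v 1, v 2, -v 3]

lemma phi4_invol : Function.Involutive phi4 := by
  intro v; funext i; fin_cases i <;> simp [phi4]

lemma phi4_inj : Function.Injective phi4 := phi4_invol.injective

lemma vecMul_hfull_neg (s z₂ : ℝ) (w : ℝ × ℝ) (x₁ x₂ : ℝ) (u : Fin 4 → ℝ) :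
    Matrix.vecMul u (hfull s (-z₂) (w.1, -w.2) (-x₁) (-x₂)) =
    phi4 (Matrix.vecMul ![-(u 0), u 1, -(u 2), u 3] (hfull s z₂ w x₁ x₂)) := by
  have a1 :=
    hz_neg' (lam ^ (-(2 * rr s)) * Real.sqrt (s / thetaHat)) (lam ^ (-(2 * rr s)) * z₂) x₁
  have b1 := hz_neg' (lam ^ (2 * rr s) * w.1) (lam ^ (2 * rr s) * w.2) x₂
  have e1 : hfull s (-z₂) (w.1, -w.2) (-x₁) (-x₂)
      = bd (hz (lam ^ (-(2 * rr s)) * Real.sqrt (s / thetaHat), -(lam ^ (-(2 * rr s)) * z₂)) (-x₁))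
           (hz (lam ^ (2 * rr s) * w.1, -(lam ^ (2 * rr s) * w.2)) (-x₂)) := by
    simp only [hfull, smul_pair', mul_neg]
  have e2 : hfull s z₂ w x₁ x₂
      = bd (hz (lam ^ (-(2 * rr s)) * Real.sqrt (s / thetaHat), lam ^ (-(2 * rr s)) * z₂) x₁)
           (hz (lam ^ (2 * rr s) * w.1, lam ^ (2 * rr s) * w.2) x₂) := by
    simp only [hfull, smul_pair']
  rw [e1, e2, a1, b1, vecMul_bd', vecMul_bd']
  funext j
  fin_cases j <;>
    · simp [phi4]
      try ring

lemma neg_latvec_vec (β₁ β₂ : Zsqrtd 2) :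
    ![-(latvec β₁ β₂ 0), latvec β₁ β₂ 1, -(latvec β₁ β₂ 2), latvec β₁ β₂ 3]
      = latvec (-β₁) β₂ := by
  funext i; fin_cases i <;> simp [latvec, emb_neg', embc_neg']

lemma latimage_hfull_neg (s z₂ : ℝ) (w : ℝ × ℝ) (x₁ x₂ : ℝ) :
    latimage (hfull s (-z₂) (w.1, -w.2) (-x₁) (-x₂))
      = phi4 '' latimage (hfull s z₂ w x₁ x₂) := by
  ext v
  constructor
  · rintro ⟨u, ⟨β₁, β₂, rfl⟩, rfl⟩
    refine ⟨Matrix.vecMul (latvec (-β₁) β₂) (hfull s z₂ w x₁ x₂),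
      ⟨latvec (-β₁) β₂, ⟨-β₁, β₂, rfl⟩, rfl⟩, ?_⟩
    dsimp only
    rw [vecMul_hfull_neg, neg_latvec_vec]
  · rintro ⟨v', ⟨u, ⟨β₁, β₂, rfl⟩, rfl⟩, rfl⟩
    refine ⟨latvec (-β₁) β₂, ⟨-β₁, β₂, rfl⟩, ?_⟩
    dsimp only
    rw [vecMul_hfull_neg, neg_latvec_vec, neg_neg]

lemma phi4_mem_calTs (s : ℝ) (v : Fin 4 → ℝ) : phi4 v ∈ calTs s ↔ v ∈ calTs s := by
  simp [calTs, calT, Tset, Woct, phi4, mul_neg, abs_neg]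

lemma image_phi4_calTs (s : ℝ) : phi4 '' calTs s = calTs s := by
  ext v
  constructor
  · rintro ⟨u, hu, rfl⟩; exact (phi4_mem_calTs s u).mpr hu
  · intro hv; exact ⟨phi4 v, (phi4_mem_calTs s v).mpr hv, phi4_invol v⟩

lemma key_empty (s z₂ : ℝ) (w : ℝ × ℝ) (x₁ x₂ : ℝ) :
    (latimage (hfull s (-z₂) (w.1, -w.2) (-x₁) (-x₂)) ∩ calTs s = ∅) ↔
    (latimage (hfull s z₂ w x₁ x₂) ∩ calTs s = ∅) := by
  rw [latimage_hfull_neg]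
  have : phi4 '' latimage (hfull s z₂ w x₁ x₂) ∩ calTs s
      = phi4 '' (latimage (hfull s z₂ w x₁ x₂) ∩ calTs s) := by
    conv_lhs => rw [← image_phi4_calTs s]
    rw [← Set.image_inter phi4_inj]
  rw [this, Set.image_eq_empty]

lemma Bbox_neg_image (α₃ α₄ : Zsqrtd 2) (C₁ s : ℝ) :
    Neg.neg '' Bbox α₃ (-α₄) C₁ s = Bbox α₃ α₄ C₁ s := by
  ext x
  simp only [Set.image_neg_eq_neg, Set.mem_neg, Bbox, Set.mem_setOf_eq, Prod.fst_neg,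
    Prod.snd_neg, emb_neg', embc_neg']
  rw [show -x.1 + -emb α₄ / emb α₃ = -(x.1 + emb α₄ / emb α₃) by ring,
    show -x.2 + -embc α₄ / embc α₃ = -(x.2 + embc α₄ / embc α₃) by ring, abs_neg, abs_neg]

lemma mem_Woct_negsnd (p : ℝ × ℝ) : (p.1, -p.2) ∈ Woct ↔ p ∈ Woct := by
  simp [Woct, abs_neg]

lemma mem_smulWoct_negsnd (c : ℝ) (p : ℝ × ℝ) : (p.1, -p.2) ∈ c • Woct ↔ p ∈ c • Woct := by
  have key : ∀ r : ℝ × ℝ, r ∈ c • Woct → (r.1, -r.2) ∈ c • Woct := by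
    rintro r ⟨q, hq, rfl⟩
    refine ⟨(q.1, -q.2), (mem_Woct_negsnd q).mpr hq, ?_⟩
    simp [smul_pair', mul_neg]
  constructor
  · intro h; simpa using key _ h
  · intro h; exact key p h

lemma mem_Wp_negsnd (p : ℝ × ℝ) : (p.1, -p.2) ∈ Wp ↔ p ∈ Wp := by
  simp only [Wp, Set.mem_diff, mem_Woct_negsnd, mem_smulWoct_negsnd]

lemma Wp_image : (fun p : ℝ × ℝ => (p.1, -p.2)) '' Wp = Wp := by
  ext p
  constructor
  · rintro ⟨q, hq, rfl⟩; exact (mem_Wp_negsnd q).mpr hq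
  · intro hp; exact ⟨(p.1, -p.2), (mem_Wp_negsnd p).mpr hp, by simp⟩

end Stmt12Aux

theorem stmt12 (α₃ α₄ : Zsqrtd 2) (hcop : IsCoprime α₃ α₄) (hpos : 0 < emb α₃)
    (C₁ : ℝ) (hC₁ : 0 < C₁) :
    ∀ s > (0:ℝ), Fminus α₃ α₄ C₁ s = Fplus α₃ (-α₄) C₁ s := by
  intro s hs
  unfold Fminus Fplus
  congr 1
  have himg : Neg.neg '' (Set.Ioo (0:ℝ) (Real.sqrt (s / thetaHat)))
      = Set.Ioo (-Real.sqrt (s / thetaHat)) (0:ℝ) := by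
    rw [Set.image_neg_eq_neg]; simp
  rw [← himg, (Measure.measurePreserving_neg _).setIntegral_image_emb
    (MeasurableEquiv.neg ℝ).measurableEmbedding]
  refine integral_congr_ae (Filter.Eventually.of_forall fun z₂ => ?_)
  dsimp only
  have hψ : MeasurePreserving (fun p : ℝ × ℝ => (p.1, -p.2))
      (volume : Measure (ℝ × ℝ)) volume := by
    rw [Measure.volume_eq_prod]
    exact (MeasurePreserving.id _).prod (Measure.measurePreserving_neg _)
  conv_lhs => rw [← Wp_image]
  rw [hψ.setIntegral_image_emb
    ((MeasurableEquiv.refl ℝ).prodCongr (MeasurableEquiv.neg ℝ)).measurableEmbedding]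
  refine integral_congr_ae (Filter.Eventually.of_forall fun w => ?_)
  dsimp only
  conv_lhs => rw [← Bbox_neg_image α₃ α₄ C₁ s]
  rw [(Measure.measurePreserving_neg _).setIntegral_image_emb
    (MeasurableEquiv.neg (ℝ × ℝ)).measurableEmbedding]
  refine integral_congr_ae (Filter.Eventually.of_forall fun x => ?_)
  dsimp only
  simp only [Prod.fst_neg, Prod.snd_neg]
  exact ind_congr (key_empty s z₂ w x.1 x.2)


end
end
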